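/- Let (u_k) be a strictly increasing sequence of positive integers tending to infinity with u_1 ≥ 3, and define I(n) = k for u_k ≤ n < u_{k+1}. Then limsup_{n→∞} I(n)·log n / n = limsup_{k→∞} k·log u_k / u_k, and similarly for liminf. -/

import Mathlib

private lemma log_div_anti {x y : ℝ} (hx : 3 ≤ x) (hxy : x ≤ y) :
    Real.log y / y ≤ Real.log x / x := by
  have he : Real.exp 1 ≤ 3 := Real.exp_one_lt_d9.le.trans (by norm_num)
  exact Real.log_div_self_antitoneOn (Set.mem_setOf.mpr (he.trans hx))
    (Set.mem_setOf.mpr (he.trans (hx.trans hxy))) hxy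

theorem escape_rate_limsup_liminf_log (u : ℕ → ℕ) (I : ℕ → ℕ)
    (hu : StrictMono u) (hpos : ∀ k, 1 ≤ u k) (hu1 : 3 ≤ u 1)
    (hutop : Filter.Tendsto u Filter.atTop Filter.atTop)
    (hI : ∀ k n, u k ≤ n → n < u (k + 1) → I n = k) :
    Filter.limsup (fun n : ℕ => (I n : ℝ) * Real.log n / n) Filter.atTop
        = Filter.limsup (fun k : ℕ => (k : ℝ) * Real.log (u k) / u k) Filter.atTop
      ∧ Filter.liminf (fun n : ℕ => (I n : ℝ) * Real.log n / n) Filter.atTop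
        = Filter.liminf (fun k : ℕ => (k : ℝ) * Real.log (u k) / u k) Filter.atTop := by
  set f : ℕ → ℝ := fun n => (I n : ℝ) * Real.log n / n with hf
  set g : ℕ → ℝ := fun k => (k : ℝ) * Real.log (u k) / u k with hg
  -- basic facts
  have hku : ∀ k, k ≤ u k := fun k => hu.le_apply
  have hgu : ∀ k, g k = f (u k) := by
    intro k
    have : I (u k) = k := hI k (u k) le_rfl (hu (Nat.lt_succ_self k))
    simp [hf, hg, this]
  have hu3 : ∀ k, 1 ≤ k → 3 ≤ u k := by
    intro k hk
    exact hu1.trans (hu.monotone hk)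
  -- description of I n for n ≥ u 1
  have hIn : ∀ n, u 1 ≤ n → 1 ≤ I n ∧ u (I n) ≤ n ∧ n < u (I n + 1) := by
    intro n hn
    have h1n : 1 ≤ n := (hpos 1).trans hn
    set k := Nat.findGreatest (fun k => u k ≤ n) n with hkdef
    have hk1 : 1 ≤ k := Nat.le_findGreatest (P := fun k => u k ≤ n) h1n hn
    have hPk : u k ≤ n := Nat.findGreatest_spec (P := fun k => u k ≤ n) h1n hn
    have hnk : n < u (k + 1) := by
      by_contra h
      push_neg at h
      have hle : k + 1 ≤ n := le_trans (hku (k + 1)) h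
      exact Nat.findGreatest_is_greatest (P := fun k => u k ≤ n) (Nat.lt_succ_self k) hle h
    have hIk : I n = k := hI k n hPk hnk
    exact ⟨hIk ▸ hk1, hIk ▸ hPk, hIk ▸ hnk⟩
  -- I n is eventually large
  have hIlarge : ∀ K, 1 ≤ K → ∀ n, u K ≤ n → K ≤ I n := by
    intro K hK n hn
    have hn1 : u 1 ≤ n := (hu.monotone hK).trans hn
    obtain ⟨h1, h2, h3⟩ := hIn n hn1
    by_contra h
    push_neg at h
    have : u (I n + 1) ≤ u K := hu.monotone h
    omega
  -- f is nonnegative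
  have hf0 : ∀ n, 0 ≤ f n := by
    intro n
    rcases Nat.eq_zero_or_pos n with h | h
    · simp [hf, h]
    · have : (0:ℝ) ≤ Real.log n := Real.log_nonneg (by exact_mod_cast h)
      have : (0:ℝ) ≤ (I n : ℝ) * Real.log n := mul_nonneg (Nat.cast_nonneg _) this
      positivity
  -- key upper inequality : f n ≤ g (I n) for n ≥ u 1
  have hkey_up : ∀ n, u 1 ≤ n → f n ≤ g (I n) := by
    intro n hn
    obtain ⟨h1, h2, _⟩ := hIn n hn
    have h3 : (3:ℝ) ≤ (u (I n) : ℝ) := by exact_mod_cast hu3 _ h1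
    have hle : (u (I n) : ℝ) ≤ (n : ℝ) := by exact_mod_cast h2
    have := log_div_anti h3 hle
    calc f n = (I n : ℝ) * (Real.log n / n) := by simp only [hf]; ring
      _ ≤ (I n : ℝ) * (Real.log (u (I n)) / u (I n)) :=
          mul_le_mul_of_nonneg_left this (Nat.cast_nonneg _)
      _ = g (I n) := by simp only [hg]; ring
  -- upper (limsup) sets coincide
  have hUset : {a : ℝ | ∀ᶠ n in Filter.atTop, f n ≤ a}
      = {a : ℝ | ∀ᶠ k in Filter.atTop, g k ≤ a} := by
    ext a
    simp only [Set.mem_setOf_eq, Filter.eventually_atTop]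
    constructor
    · rintro ⟨N, hN⟩
      exact ⟨N, fun k hk => (hgu k) ▸ hN (u k) (hk.trans (hku k))⟩
    · rintro ⟨K, hK⟩
      refine ⟨u (max K 1), fun n hn => ?_⟩
      have hK1 : 1 ≤ max K 1 := le_max_right _ _
      have hIK : max K 1 ≤ I n := hIlarge _ hK1 n hn
      have hn1 : u 1 ≤ n := (hu.monotone hK1).trans hn
      exact (hkey_up n hn1).trans (hK (I n) ((le_max_left _ _).trans hIK))
  -- lower sets
  set Lf := {a : ℝ | ∀ᶠ n in Filter.atTop, a ≤ f n} with hLf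
  set Lg := {a : ℝ | ∀ᶠ k in Filter.atTop, a ≤ g k} with hLg
  have h0f : (0:ℝ) ∈ Lf := Filter.Eventually.of_forall hf0
  have hsub : Lf ⊆ Lg := by
    intro a ha
    simp only [hLf, hLg, Set.mem_setOf_eq, Filter.eventually_atTop] at ha ⊢
    obtain ⟨N, hN⟩ := ha
    exact ⟨N, fun k hk => (hgu k) ▸ hN (u k) (hk.trans (hku k))⟩
  have h0g : (0:ℝ) ∈ Lg := hsub h0f
  -- key lower fact : a ∈ Lg → ∀ ε > 0, a - ε ∈ Lf
  have hkey_low : ∀ a ∈ Lg, ∀ ε : ℝ, 0 < ε → a - ε ∈ Lf := by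
    intro a ha ε hε
    rcases le_or_gt a 0 with h | h
    · refine Filter.Eventually.of_forall fun n => ?_
      have := hf0 n
      linarith
    · simp only [hLg, Set.mem_setOf_eq, Filter.eventually_atTop] at ha
      obtain ⟨K, hK⟩ := ha
      obtain ⟨M, hM⟩ := exists_nat_ge (a / ε)
      set K' := max (max K M) 1 with hK'
      simp only [hLf, Set.mem_setOf_eq, Filter.eventually_atTop]
      refine ⟨u K', fun n hn => ?_⟩
      have hK1 : 1 ≤ K' := le_max_right _ _
      have hk' : K' ≤ I n := hIlarge _ hK1 n hn
      set k := I n with hkdef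
      have hn1 : u 1 ≤ n := (hu.monotone hK1).trans hn
      obtain ⟨h1, h2, h3⟩ := hIn n hn1
      have hkK : K ≤ k := le_trans (le_trans (le_max_left _ _) (le_max_left _ _)) hk'
      have hkM : M ≤ k := le_trans (le_trans (le_max_right _ _) (le_max_left _ _)) hk'
      -- 3 ≤ n and n ≤ u (k+1)
      have h3n : (3:ℝ) ≤ (n:ℝ) := by
        have := hu3 1 le_rfl
        have : 3 ≤ n := le_trans this hn1
        exact_mod_cast this
      have hnle : (n:ℝ) ≤ (u (k+1) : ℝ) := by exact_mod_cast h3.le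
      have hlog := log_div_anti h3n hnle
      have hga : a ≤ g (k+1) := hK (k+1) (by omega)
      -- f n ≥ (k/(k+1)) * g (k+1)
      have hstep : (k:ℝ) * (Real.log (u (k+1)) / u (k+1)) ≤ f n := by
        have : f n = (I n : ℝ) * (Real.log n / n) := by simp only [hf]; ring
        rw [this]
        exact mul_le_mul_of_nonneg_left hlog (Nat.cast_nonneg _)
      have hgpos : g (k+1) = ((k:ℝ)+1) * (Real.log (u (k+1)) / u (k+1)) := by
        simp only [hg]; push_cast; ring
      have hlogpos : 0 ≤ Real.log (u (k+1)) / u (k+1) := by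
        have h1u : (1:ℝ) ≤ (u (k+1) : ℝ) := by exact_mod_cast hpos (k+1)
        exact div_nonneg (Real.log_nonneg h1u) (by linarith)
      have hk1pos : (0:ℝ) < (k:ℝ)+1 := by positivity
      have hkne : ((k:ℝ)+1) ≠ 0 := ne_of_gt hk1pos
      have hune : ((u (k+1) : ℕ) : ℝ) ≠ 0 := by
        have := hpos (k+1); positivity
      have hratio : ((k:ℝ)/((k:ℝ)+1)) * g (k+1) ≤ f n := by
        rw [hgpos]
        have : ((k:ℝ)/((k:ℝ)+1)) * (((k:ℝ)+1) * (Real.log (u (k+1)) / u (k+1)))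
            = (k:ℝ) * (Real.log (u (k+1)) / u (k+1)) := by
          field_simp
        rw [this]; exact hstep
      have haratio : ((k:ℝ)/((k:ℝ)+1)) * a ≤ ((k:ℝ)/((k:ℝ)+1)) * g (k+1) := by
        apply mul_le_mul_of_nonneg_left hga
        positivity
      have hsmall : a - ε ≤ ((k:ℝ)/((k:ℝ)+1)) * a := by
        have heq : ((k:ℝ)/((k:ℝ)+1)) * a = a - a / ((k:ℝ)+1) := by
          field_simp; ring
        have hMk : (M:ℝ) ≤ (k:ℝ) := by exact_mod_cast hkM
        have haM : a ≤ ε * ((k:ℝ)+1) := by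
          rw [div_le_iff₀ hε] at hM
          nlinarith
        have hle2 : a / ((k:ℝ)+1) ≤ ε := by
          rw [div_le_iff₀ hk1pos]; linarith
        linarith [heq.le, heq.ge]
      linarith
  constructor
  · rw [Filter.limsup_eq, Filter.limsup_eq, hUset]
  · rw [Filter.liminf_eq, Filter.liminf_eq]
    by_cases hbdd : BddAbove Lf
    · have hbddg : BddAbove Lg := by
        obtain ⟨b, hb⟩ := hbdd
        refine ⟨b + 1, fun a ha => ?_⟩
        rcases le_or_gt a 0 with h | h
        · have := hb h0f; linarith
        · have := hb (hkey_low a ha 1 one_pos); linarith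
      apply le_antisymm
      · exact csSup_le_csSup hbddg ⟨0, h0f⟩ hsub
      · refine csSup_le ⟨0, h0g⟩ fun a ha => ?_
        refine le_of_forall_pos_le_add fun ε hε => ?_
        have := le_csSup hbdd (hkey_low a ha ε hε)
        linarith
    · have hbddg : ¬ BddAbove Lg := fun h => hbdd (h.mono hsub)
      rw [Real.sSup_of_not_bddAbove hbdd, Real.sSup_of_not_bddAbove hbddg]
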